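/- Let A ⊆ ℝ^{n} be closed convex and M : ℝ^{n} → ℝ^{n} monotone, with SOL(A,M) nonempty. For each t let ε_t > 0 with ε_t ↓ 0, r_t → 0 with r_t/ε_t → 0, and let y(t) be the unique solution of VI((1−r_t)A, M + ε_t·Id), where (1−r_t)A = {x ∈ A : dist(x, ∂A) ≥ r_t}. Assume M is bounded by l on A and that the projection onto (1−r)A satisfies ‖Proj_{(1−r)A} x − x‖ = O(r) for x ∈ A. Then limsup_{t→∞} ‖y(t)‖ ≤ ‖a‖, where a is the least-norm solution of VI(A, M); in particular, the sequence y(t) is bounded. -/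

import Mathlib

/-!
Test the variational inequality of `y = y(t)` at a point `p ∈ (1 - r_t)A` within `O(r_t)` of `a`,
and combine it with monotonicity of `M` and the variational inequality of `a` tested at `y`.
This gives `ε‖y‖² ≤ ε‖y‖‖a‖ + l·O(r) + ε‖y‖·O(r)`, a quadratic inequality in `‖y‖` whose
solution is `‖y‖ ≤ ‖a‖ + O(r) + O(√(r/ε))`; the right-hand side tends to `‖a‖`.
-/

open RealInnerProductSpace

/-- `p` is the Euclidean projection of `x` onto `C`. -/
def IsProjOn {n : ℕ} (C : Set (EuclideanSpace ℝ (Fin n))) (x p : EuclideanSpace ℝ (Fin n)) :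
    Prop :=
  p ∈ C ∧ ∀ y ∈ C, ‖x - p‖ ≤ ‖x - y‖

open Filter Topology

lemma le_add_sqrt_of_sq_le_mul_add {s b c : ℝ} (hb : 0 ≤ b) (hc : 0 ≤ c)
    (h : s ^ 2 ≤ s * b + c) : s ≤ b + √c := by
  by_contra! hlt
  have hsqrt : 0 ≤ √c := Real.sqrt_nonneg c
  have hsq : √c ^ 2 = c := Real.sq_sqrt hc
  nlinarith [mul_lt_mul_of_pos_left hlt (by linarith : 0 < s)]

section RegularizedVI

variable {E : Type*} [NormedAddCommGroup E] [InnerProductSpace ℝ E] {M : E → E} {ε : ℝ}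
  {a y p : E}

lemma mul_norm_sq_le_of_regularized_vi (hε : 0 ≤ ε) (hmono : 0 ≤ ⟪M y - M a, y - a⟫)
    (hy : 0 ≤ ⟪M y + ε • y, p - y⟫) (ha : 0 ≤ ⟪M a, y - a⟫) :
    ε * ‖y‖ ^ 2 ≤ ε * (‖y‖ * ‖a‖) + ‖M y‖ * ‖p - a‖ + ε * (‖y‖ * ‖p - a‖) := by
  have hsplit : ⟪M y + ε • y, p - y⟫ =
      -⟪M y - M a, y - a⟫ - ⟪M a, y - a⟫ + ⟪M y, p - a⟫
        + ε * ⟪y, p - a⟫ + ε * ⟪y, a⟫ - ε * ‖y‖ ^ 2 := by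
    simp only [inner_add_left, inner_sub_left, inner_sub_right, real_inner_smul_left,
      real_inner_self_eq_norm_sq]
    ring
  have h₁ : ⟪M y, p - a⟫ ≤ ‖M y‖ * ‖p - a‖ := real_inner_le_norm _ _
  have h₂ : ε * ⟪y, p - a⟫ ≤ ε * (‖y‖ * ‖p - a‖) :=
    mul_le_mul_of_nonneg_left (real_inner_le_norm _ _) hε
  have h₃ : ε * ⟪y, a⟫ ≤ ε * (‖y‖ * ‖a‖) :=
    mul_le_mul_of_nonneg_left (real_inner_le_norm _ _) hε
  linarith

lemma norm_le_add_sqrt_of_regularized_vi {L δ : ℝ} (hε : 0 < ε)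
    (hmono : 0 ≤ ⟪M y - M a, y - a⟫) (hy : 0 ≤ ⟪M y + ε • y, p - y⟫) (ha : 0 ≤ ⟪M a, y - a⟫)
    (hp : ‖p - a‖ ≤ δ) (hM : ‖M y‖ ≤ L) :
    ‖y‖ ≤ ‖a‖ + δ + √(L * (δ / ε)) := by
  have hδ : 0 ≤ δ := (norm_nonneg _).trans hp
  have hL : 0 ≤ L := (norm_nonneg _).trans hM
  have hkey := mul_norm_sq_le_of_regularized_vi hε.le hmono hy ha
  have hquad : ε * ‖y‖ ^ 2 ≤ ε * (‖y‖ * (‖a‖ + δ) + L * (δ / ε)) := by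
    have hexpand : ε * (‖y‖ * (‖a‖ + δ) + L * (δ / ε))
        = ε * (‖y‖ * ‖a‖) + L * δ + ε * (‖y‖ * δ) := by
      field_simp
      ring
    have : ‖M y‖ * ‖p - a‖ ≤ L * δ := mul_le_mul hM hp (norm_nonneg _) hL
    have : ε * (‖y‖ * ‖p - a‖) ≤ ε * (‖y‖ * δ) := by gcongr
    linarith
  exact le_add_sqrt_of_sq_le_mul_add (by positivity) (by positivity)
    (le_of_mul_le_mul_left hquad hε)

end RegularizedVI

lemma isClosed_sep_le_infDist {X : Type*} [PseudoMetricSpace X] {A : Set X} (hA : IsClosed A)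
    (r : ℝ) (B : Set X) : IsClosed {x ∈ A | r ≤ Metric.infDist x B} :=
  hA.inter (isClosed_le continuous_const (Metric.continuous_infDist_pt _))

lemma exists_isProjOn {n : ℕ} {K : Set (EuclideanSpace ℝ (Fin n))} (hK : IsClosed K)
    (hKne : K.Nonempty) (x : EuclideanSpace ℝ (Fin n)) : ∃ p, IsProjOn K x p := by
  obtain ⟨p, hpK, hpx⟩ := hK.exists_infDist_eq_dist hKne x
  refine ⟨p, hpK, fun z hz => ?_⟩
  rw [← dist_eq_norm, ← dist_eq_norm, ← hpx]
  exact Metric.infDist_le_dist_of_mem hz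

lemma limsup_norm_le_of_le_of_tendsto {E : Type*} [SeminormedAddCommGroup E] {y : ℕ → E}
    {g : ℕ → ℝ} {c : ℝ} (hyg : ∀ t, ‖y t‖ ≤ g t) (hg : Tendsto g atTop (𝓝 c)) :
    limsup (fun t => ‖y t‖) atTop ≤ c :=
  hg.limsup_eq ▸ limsup_le_limsup (.of_forall hyg)
    (isBoundedUnder_of ⟨0, fun t => norm_nonneg (y t)⟩).isCoboundedUnder_le hg.isBoundedUnder_le

lemma isBounded_range_of_norm_le_of_tendsto {E : Type*} [SeminormedAddCommGroup E]
    {y : ℕ → E} {g : ℕ → ℝ} {c : ℝ} (hyg : ∀ t, ‖y t‖ ≤ g t) (hg : Tendsto g atTop (𝓝 c)) :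
    Bornology.IsBounded (Set.range y) := by
  obtain ⟨B, hB⟩ := hg.bddAbove_range
  refine isBounded_iff_forall_norm_le.2 ⟨B, ?_⟩
  rintro _ ⟨t, rfl⟩
  exact (hyg t).trans (hB ⟨t, rfl⟩)

theorem tikhonov_sequence_bounded_general {n : ℕ}
    (A : Set (EuclideanSpace ℝ (Fin n))) (hAc : IsClosed A)
    (M : EuclideanSpace ℝ (Fin n) → EuclideanSpace ℝ (Fin n))
    (hmono : ∀ x y, 0 ≤ ⟪M x - M y, x - y⟫)
    (l : ℝ) (hl : ∀ x ∈ A, ‖M x‖ ≤ l)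
    (ε r : ℕ → ℝ) (hεpos : ∀ t, 0 < ε t)
    (hr0 : Filter.Tendsto r Filter.atTop (nhds 0))
    (hrε : Filter.Tendsto (fun t => r t / ε t) Filter.atTop (nhds 0))
    -- the shrunk sets (1 − r_t)A
    (S : ℕ → Set (EuclideanSpace ℝ (Fin n)))
    (hS : ∀ t, S t = {x ∈ A | r t ≤ Metric.infDist x (frontier A)})
    -- projection onto the shrunk set moves points of A by at most O(r_t)
    (C : ℝ) (hproj : ∀ t, ∀ x ∈ A, ∀ p, IsProjOn (S t) x p → ‖p - x‖ ≤ C * r t)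
    -- y t solves VI((1−r_t)A, M + ε_t Id)
    (y : ℕ → EuclideanSpace ℝ (Fin n)) (hyS : ∀ t, y t ∈ S t)
    (hyVI : ∀ t, ∀ x ∈ S t, 0 ≤ ⟪M (y t) + ε t • y t, x - y t⟫)
    -- a is the least-norm solution of VI(A, M)
    (a : EuclideanSpace ℝ (Fin n)) (haA : a ∈ A)
    (haVI : ∀ x ∈ A, 0 ≤ ⟪M a, x - a⟫) :
    Filter.limsup (fun t => ‖y t‖) Filter.atTop ≤ ‖a‖ ∧
      Bornology.IsBounded (Set.range y) := by
  have hyA : ∀ t, y t ∈ A := fun t => (hS t ▸ hyS t).1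
  have hbound : ∀ t, ‖y t‖ ≤ ‖a‖ + C * r t + √(l * (C * r t / ε t)) := by
    intro t
    obtain ⟨p, hp⟩ := exists_isProjOn ((hS t).symm ▸ isClosed_sep_le_infDist hAc _ _)
      ⟨y t, hyS t⟩ a
    exact norm_le_add_sqrt_of_regularized_vi (hεpos t) (hmono _ _) (hyVI t p hp.1)
      (haVI _ (hyA t)) (hproj t a haA p hp) (hl _ (hyA t))
  have hlim : Tendsto (fun t => ‖a‖ + C * r t + √(l * (C * r t / ε t))) atTop (𝓝 ‖a‖) := by
    have hsqrt : Tendsto (fun t => √(l * (C * r t / ε t))) atTop (𝓝 0) := by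
      simpa [mul_div_assoc, mul_assoc] using (hrε.const_mul (l * C)).sqrt
    simpa using (tendsto_const_nhds.add (hr0.const_mul C)).add hsqrt
  exact ⟨limsup_norm_le_of_le_of_tendsto hbound hlim,
    isBounded_range_of_norm_le_of_tendsto hbound hlim⟩

/-- The doubly regularized Tikhonov sequence `y t`, solving `VI((1−r_t)A, M + ε_t·Id)`, satisfies
`limsup ‖y t‖ ≤ ‖a‖` where `a` is the least-norm solution of `VI(A, M)`; in particular it is
bounded. -/
theorem tikhonov_sequence_bounded {n : ℕ}
    (A : Set (EuclideanSpace ℝ (Fin n))) (hAne : A.Nonempty) (hAc : IsClosed A)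
    (hAconv : Convex ℝ A)
    (M : EuclideanSpace ℝ (Fin n) → EuclideanSpace ℝ (Fin n))
    (hmono : ∀ x y, 0 ≤ ⟪M x - M y, x - y⟫)
    (l : ℝ) (hl : ∀ x ∈ A, ‖M x‖ ≤ l)
    (ε r : ℕ → ℝ) (hεpos : ∀ t, 0 < ε t) (hεanti : Antitone ε)
    (hε0 : Filter.Tendsto ε Filter.atTop (nhds 0))
    (hrpos : ∀ t, 0 < r t) (hr0 : Filter.Tendsto r Filter.atTop (nhds 0))
    (hrε : Filter.Tendsto (fun t => r t / ε t) Filter.atTop (nhds 0))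
    -- the shrunk sets (1 − r_t)A
    (S : ℕ → Set (EuclideanSpace ℝ (Fin n)))
    (hS : ∀ t, S t = {x ∈ A | r t ≤ Metric.infDist x (frontier A)})
    -- projection onto the shrunk set moves points of A by at most O(r_t)
    (C : ℝ) (hproj : ∀ t, ∀ x ∈ A, ∀ p, IsProjOn (S t) x p → ‖p - x‖ ≤ C * r t)
    -- y t solves VI((1−r_t)A, M + ε_t Id)
    (y : ℕ → EuclideanSpace ℝ (Fin n)) (hyS : ∀ t, y t ∈ S t)
    (hyVI : ∀ t, ∀ x ∈ S t, 0 ≤ ⟪M (y t) + ε t • y t, x - y t⟫)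
    -- a is the least-norm solution of VI(A, M)
    (a : EuclideanSpace ℝ (Fin n)) (haA : a ∈ A)
    (haVI : ∀ x ∈ A, 0 ≤ ⟪M a, x - a⟫)
    (hamin : ∀ b ∈ A, (∀ x ∈ A, 0 ≤ ⟪M b, x - b⟫) → ‖a‖ ≤ ‖b‖) :
    Filter.limsup (fun t => ‖y t‖) Filter.atTop ≤ ‖a‖ ∧
      Bornology.IsBounded (Set.range y) :=
  tikhonov_sequence_bounded_general A hAc M hmono l hl ε r hεpos hr0 hrε S hS C hproj y hyS hyVI a
    haA haVI
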